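/- L^p-integrability of the symbol m_α: let α > 0 and 1 ≤ p < ∞. Then ∫_{ℝ²} |m_α(ξ₁,ξ₂)|^p d(ξ₁,ξ₂) < ∞ if and only if p > 2/α + 1/2. -/

import Mathlib

open MeasureTheory

noncomputable section

/-- The symbol `m_α(ξ) = ξ₁² / (ξ₁² + ξ₂² + |ξ₁|^{α+2})` (with value `0` at the origin,
which is the value Lean's division by zero gives). -/
def mSymb (α : ℝ) (ξ : ℝ × ℝ) : ℝ :=
  ξ.1 ^ 2 / (ξ.1 ^ 2 + ξ.2 ^ 2 + |ξ.1| ^ (α + 2))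

/-!
For fixed `ξ₁ ≠ 0`, put `A = ξ₁² + |ξ₁|^{α+2} = ξ₁² (1 + |ξ₁|^α)`; the substitution `ξ₂ = √A u`
gives `∫ |m_α(ξ₁, ·)|^p = C_p |ξ₁| (1 + |ξ₁|^α)^{1/2 - p}` with `C_p = ∫ (1 + u²)^{-p}`, which is
finite and positive because `p > 1/2`. By Fubini–Tonelli, `m_α ∈ L^p` iff this function of `ξ₁`
is integrable. It is even, continuous, and comparable to `ξ₁^{1 - α(p - 1/2)}` at infinity, so it
is integrable iff `α (p - 1/2) > 2`, i.e. `p > 2/α + 1/2`.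
-/

open Set Filter Asymptotics Real

theorem integrable_comp_abs_iff {E : Type*} [NormedAddCommGroup E] (f : ℝ → E) :
    Integrable (fun x => f |x|) ↔ IntegrableOn f (Ici 0) := by
  have h_Ici : IntegrableOn (fun x => f |x|) (Ici 0) ↔ IntegrableOn f (Ici 0) :=
    integrableOn_congr_fun (fun x hx => by rw [abs_of_nonneg hx]) measurableSet_Ici
  have h_Iic : IntegrableOn (fun x => f |x|) (Iic 0) ↔ IntegrableOn f (Ici 0) := by
    conv_lhs => rw [← Measure.map_neg_eq_self (volume : Measure ℝ)]
    rw [← h_Ici, measurableEmbedding_neg.integrableOn_map_iff]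
    simp [Function.comp_def]
  rw [← integrableOn_univ, ← Iic_union_Ici (a := (0 : ℝ)), integrableOn_union, h_Ici, h_Iic,
    and_self]

theorem Asymptotics.IsTheta.integrableAtFilter_iff {α E F : Type*} [MeasurableSpace α]
    [NormedAddCommGroup E] [NormedAddCommGroup F] {μ : Measure α} {l : Filter α}
    [l.IsMeasurablyGenerated] {f : α → E} {g : α → F} (h : f =Θ[l] g)
    (hf : StronglyMeasurableAtFilter f l μ) (hg : StronglyMeasurableAtFilter g l μ) :
    IntegrableAtFilter f l μ ↔ IntegrableAtFilter g l μ :=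
  ⟨h.isBigO_symm.integrableAtFilter hg, h.isBigO.integrableAtFilter hf⟩

theorem isTheta_mul_one_add_rpow_rpow_atTop {α : ℝ} (hα : 0 < α) (q : ℝ) :
    (fun t : ℝ => t * (1 + t ^ α) ^ (-q)) =Θ[atTop] fun t => t ^ (1 - α * q) := by
  have h_pos : ∀ᶠ t : ℝ in atTop, 0 < t := eventually_gt_atTop 0
  have h_equiv : (fun t : ℝ => 1 + t ^ α) ~[atTop] fun t => t ^ α :=
    IsEquivalent.refl.const_add_of_norm_tendsto_atTop
      (tendsto_norm_atTop_atTop.comp (tendsto_rpow_atTop hα))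
  have h_rpow := h_equiv.isTheta.rpow (r := -q) (h_pos.mono fun t ht => by positivity)
    (h_pos.mono fun t ht => by positivity)
  refine ((isTheta_refl (fun t : ℝ => t) atTop).mul h_rpow).trans_eventuallyEq ?_
  filter_upwards [h_pos] with t ht
  rw [← rpow_mul ht.le, sub_eq_add_neg, rpow_add ht, rpow_one, mul_neg]

theorem integrable_abs_mul_one_add_abs_rpow_rpow_neg_iff {α : ℝ} (hα : 0 < α) (q : ℝ) :
    Integrable (fun x : ℝ => |x| * (1 + |x| ^ α) ^ (-q)) ↔ 2 < α * q := by
  set h : ℝ → ℝ := fun t => t * (1 + t ^ α) ^ (-q)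
  have h_cont : ContinuousOn h (Ici 0) := by
    refine continuousOn_id.mul ((continuousOn_const.add
      (continuousOn_id.rpow_const fun _ _ => Or.inr hα.le)).rpow_const fun t ht => Or.inl ?_)
    exact (add_pos_of_pos_of_nonneg one_pos (rpow_nonneg (mem_Ici.mp ht) α)).ne'
  have h_meas : Measurable h := by fun_prop
  have h_rpow_meas : Measurable fun t : ℝ => t ^ (1 - α * q) := by fun_prop
  rw [integrable_comp_abs_iff h, integrableOn_Ici_iff_integrableAtFilter_atTop,
    and_iff_left (h_cont.locallyIntegrableOn measurableSet_Ici),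
    (isTheta_mul_one_add_rpow_rpow_atTop hα q).integrableAtFilter_iff
      h_meas.aestronglyMeasurable.stronglyMeasurableAtFilter
      h_rpow_meas.aestronglyMeasurable.stronglyMeasurableAtFilter,
    integrableAtFilter_rpow_atTop_iff]
  constructor <;> intro <;> linarith

theorem integrable_rpow_neg_one_add_sq {p : ℝ} (hp : 1 / 2 < p) :
    Integrable fun u : ℝ => (1 + u ^ 2) ^ (-p) := by
  have := integrable_rpow_neg_one_add_norm_sq (E := ℝ) (μ := volume) (r := 2 * p)
    (by simp only [Module.finrank_self, Nat.cast_one]; linarith)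
  simpa [neg_div] using this

theorem integral_rpow_neg_one_add_sq_pos {p : ℝ} (hp : 1 / 2 < p) :
    0 < ∫ u : ℝ, (1 + u ^ 2) ^ (-p) := by
  refine integral_pos_of_integrable_nonneg_nonzero (x := 0)
    ((by fun_prop : Continuous fun u : ℝ => 1 + u ^ 2).rpow_const fun u => Or.inl ?_)
    (integrable_rpow_neg_one_add_sq hp) (fun u => rpow_nonneg ?_ _) (by simp) <;> positivity

theorem add_sq_rpow_neg_eq {A : ℝ} (hA : 0 < A) (p y : ℝ) :
    (A + y ^ 2) ^ (-p) = A ^ (-p) * (1 + (y / √A) ^ 2) ^ (-p) := by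
  rw [← mul_rpow hA.le (by positivity), div_pow, sq_sqrt hA.le, mul_add, mul_one,
    mul_div_cancel₀ _ hA.ne']

theorem integrable_rpow_neg_add_sq {A p : ℝ} (hA : 0 < A) (hp : 1 / 2 < p) :
    Integrable fun y : ℝ => (A + y ^ 2) ^ (-p) := by
  simp_rw [add_sq_rpow_neg_eq hA]
  exact ((integrable_rpow_neg_one_add_sq hp).comp_div (sqrt_pos.2 hA).ne').const_mul _

theorem integral_rpow_neg_add_sq {A : ℝ} (hA : 0 < A) (p : ℝ) :
    ∫ y : ℝ, (A + y ^ 2) ^ (-p) = A ^ (1 / 2 - p) * ∫ u : ℝ, (1 + u ^ 2) ^ (-p) := by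
  simp_rw [add_sq_rpow_neg_eq hA]
  rw [integral_const_mul, Measure.integral_comp_div (fun u => (1 + u ^ 2) ^ (-p)),
    abs_of_pos (sqrt_pos.2 hA), smul_eq_mul, ← mul_assoc, sqrt_eq_rpow, ← rpow_add hA]
  ring_nf

theorem abs_mSymb_rpow_of_ne_zero (α p : ℝ) {x : ℝ} (hx : x ≠ 0) (y : ℝ) :
    |mSymb α (x, y)| ^ p = (x ^ 2) ^ p * (x ^ 2 + |x| ^ (α + 2) + y ^ 2) ^ (-p) := by
  have h_den : 0 < x ^ 2 + |x| ^ (α + 2) + y ^ 2 := by positivity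
  rw [mSymb, add_right_comm, abs_of_nonneg (by positivity), div_rpow (sq_nonneg x) h_den.le,
    rpow_neg h_den.le, div_eq_mul_inv]

theorem sq_add_abs_rpow_add_two {α x : ℝ} (hx : x ≠ 0) :
    x ^ 2 + |x| ^ (α + 2) = x ^ 2 * (1 + |x| ^ α) := by
  rw [rpow_add (abs_pos.2 hx), rpow_two, sq_abs]
  ring

theorem integral_abs_mSymb_rpow_of_ne_zero (α p : ℝ) {x : ℝ} (hx : x ≠ 0) :
    ∫ y, |mSymb α (x, y)| ^ p
      = (∫ u : ℝ, (1 + u ^ 2) ^ (-p)) * (|x| * (1 + |x| ^ α) ^ (-(p - 1 / 2))) := by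
  have h_sq : 0 < x ^ 2 := by positivity
  simp_rw [abs_mSymb_rpow_of_ne_zero α p hx]
  have h_abs : (x ^ 2) ^ p * (x ^ 2) ^ (1 / 2 - p) = |x| := by
    rw [← rpow_add h_sq, add_sub_cancel, ← sqrt_eq_rpow, sqrt_sq_eq_abs]
  rw [integral_const_mul, integral_rpow_neg_add_sq (by positivity), sq_add_abs_rpow_add_two hx,
    mul_rpow h_sq.le (by positivity), neg_sub, ← h_abs]
  ring

theorem integrable_abs_mSymb_rpow_of_ne_zero (α : ℝ) {p x : ℝ} (hp : 1 / 2 < p) (hx : x ≠ 0) :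
    Integrable fun y => |mSymb α (x, y)| ^ p := by
  simp_rw [abs_mSymb_rpow_of_ne_zero α p hx]
  exact (integrable_rpow_neg_add_sq (by positivity) hp).const_mul _

/-- **`L^p`-integrability of the symbol `m_α`** (Lemma 3.3): for `α > 0` and `1 ≤ p < ∞`,
`m_α ∈ L^p(ℝ²)` if and only if `p > 2/α + 1/2`. -/
theorem mSymb_memLp_iff (α : ℝ) (hα : 0 < α) (p : ℝ) (hp : 1 ≤ p) :
    Integrable (fun ξ : ℝ × ℝ => |mSymb α ξ| ^ p) (volume : Measure (ℝ × ℝ)) ↔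
      2 / α + 1 / 2 < p := by
  have hp' : 1 / 2 < p := by linarith
  have h_meas : Measurable fun ξ : ℝ × ℝ => |mSymb α ξ| ^ p := by
    unfold mSymb; fun_prop
  have h_ae : ∀ᵐ x : ℝ, x ≠ 0 := Measure.ae_ne volume 0
  rw [Measure.volume_eq_prod, integrable_prod_iff h_meas.aestronglyMeasurable,
    and_iff_right (h_ae.mono fun x hx => integrable_abs_mSymb_rpow_of_ne_zero α hp' hx)]
  simp_rw [norm_of_nonneg (rpow_nonneg (abs_nonneg _) p)]
  rw [integrable_congr (h_ae.mono fun x hx => integral_abs_mSymb_rpow_of_ne_zero α p hx),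
    integrable_const_mul_iff (integral_rpow_neg_one_add_sq_pos hp').ne'.isUnit,
    integrable_abs_mul_one_add_abs_rpow_rpow_neg_iff hα, ← lt_sub_iff_add_lt, div_lt_iff₀' hα]

end
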